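/- For complex q with |q| < 1, the Jacobi theta null values satisfy θ₃(q)⁴ = θ₄(q)⁴ + θ₂(q)⁴. -/

import Mathlib

open Complex

/-- Jacobi theta null θ₃(q) = ∑_{n ∈ ℤ} q^{n²}. -/
noncomputable def theta3 (q : ℂ) : ℂ := ∑' n : ℤ, q ^ (n ^ 2)

/-- Jacobi theta null θ₄(q) = ∑_{n ∈ ℤ} (-1)ⁿ q^{n²}. -/
noncomputable def theta4 (q : ℂ) : ℂ := ∑' n : ℤ, (-1 : ℂ) ^ n * q ^ (n ^ 2)

/-- Jacobi theta null θ₂(q) = ∑_{n ∈ ℤ} q^{(n+1/2)²} (principal branch powers). -/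
noncomputable def theta2 (q : ℂ) : ℂ := ∑' n : ℤ, q ^ ((((n : ℂ) + 1 / 2) ^ 2) : ℂ)

/-!
Put θ(z, q) = ∑ zⁿ q^{n²}, so that θ₃ = θ(1, ·), θ₄ = θ(-1, ·) and θ₂(q)⁴ = q θ(q, q)⁴.
Sorting the pairs (m, n) of the double series θ(z, q)² by the parity of m + n and writing
(m, n) = (a + b, a - b) or (a + b + 1, a - b) gives the duplication formula
θ(z, q)² = θ(z², q²) θ(1, q²) + z q θ(z² q², q²) θ(q², q²).
With A = θ(1, q²) and B = θ(q², q²) it reads θ₃² = A² + q B² at z = 1, θ₄² = A² - q B² at z = -1,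
and θ(q, q)² = 2 A B at z = q, since θ(q⁴, q²) = q⁻² A. Hence
θ₃⁴ - θ₄⁴ = 4 q A² B² = q θ(q, q)⁴ = θ₂⁴.
-/

open Filter Topology

def Int.prodParityEquiv : (ℤ × ℤ) ⊕ (ℤ × ℤ) ≃ ℤ × ℤ where
  toFun := Sum.elim (fun p => (p.1 + p.2, p.1 - p.2)) (fun p => (p.1 + p.2 + 1, p.1 - p.2))
  invFun p := if (p.1 + p.2) % 2 = 0 then .inl ((p.1 + p.2) / 2, (p.1 - p.2) / 2)
    else .inr ((p.1 + p.2 - 1) / 2, (p.1 - p.2 - 1) / 2)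
  left_inv := by
    rintro (⟨a, b⟩ | ⟨a, b⟩) <;> dsimp only [Sum.elim_inl, Sum.elim_inr] <;> split_ifs <;>
      first | omega | (simp only [Sum.inl.injEq, Sum.inr.injEq, Prod.mk.injEq]; omega)
  right_inv := by
    rintro ⟨m, n⟩
    dsimp only
    split_ifs <;> simp only [Sum.elim_inl, Sum.elim_inr, Prod.mk.injEq] <;> omega

theorem tsum_int_prod_split_parity {G : Type*} [AddCommGroup G] [UniformSpace G]
    [IsUniformAddGroup G] [CompleteSpace G] [T2Space G] {f : ℤ × ℤ → G} (hf : Summable f) :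
    ∑' p, f p = ∑' p : ℤ × ℤ, f (p.1 + p.2, p.1 - p.2)
      + ∑' p : ℤ × ℤ, f (p.1 + p.2 + 1, p.1 - p.2) := by
  have hf' := Int.prodParityEquiv.summable_iff.2 hf
  rw [← Int.prodParityEquiv.tsum_eq]
  exact Summable.tsum_sum (hf'.comp_injective Sum.inl_injective)
    (hf'.comp_injective Sum.inr_injective)

theorem zpow_two_zpow_comm {G : Type*} [DivisionMonoid G] (x : G) (n : ℤ) :
    (x ^ 2) ^ n = (x ^ n) ^ 2 := by
  rw [← zpow_natCast, ← zpow_natCast, zpow_comm]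

variable {K : Type*} [NormedField K]

theorem summable_norm_pow_mul_pow_sq (z : K) {q : K} (hq : ‖q‖ < 1) :
    Summable fun n : ℕ => ‖z ^ n * q ^ (n ^ 2)‖ := by
  have hlim : Tendsto (fun n => ‖z‖ * ‖q‖ ^ n) atTop (𝓝 0) := by
    simpa using (tendsto_pow_atTop_nhds_zero_of_lt_one (norm_nonneg q) hq).const_mul ‖z‖
  refine Summable.of_norm_bounded_eventually_nat summable_geometric_two ?_
  filter_upwards [hlim.eventually (ge_mem_nhds (by norm_num : (0 : ℝ) < 1 / 2))] with n hn
  calc ‖‖z ^ n * q ^ (n ^ 2)‖‖ = (‖z‖ * ‖q‖ ^ n) ^ n := by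
        rw [norm_norm, norm_mul, norm_pow, norm_pow, mul_pow, ← pow_mul, sq]
    _ ≤ (1 / 2) ^ n := pow_le_pow_left₀ (by positivity) hn n

def thetaTerm (z q : K) (n : ℤ) : K := z ^ n * q ^ (n ^ 2)

noncomputable def thetaSeries (z q : K) : K := ∑' n : ℤ, thetaTerm z q n

theorem summable_norm_thetaTerm (z : K) {q : K} (hq : ‖q‖ < 1) :
    Summable fun n : ℤ => ‖thetaTerm z q n‖ := by
  refine .of_nat_of_neg ((summable_norm_pow_mul_pow_sq z hq).congr fun n => ?_)
    ((summable_norm_pow_mul_pow_sq z⁻¹ hq).congr fun n => ?_)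
  · rw [thetaTerm, ← Int.natCast_pow, zpow_natCast, zpow_natCast]
  · rw [thetaTerm, neg_sq, ← Int.natCast_pow, zpow_neg, zpow_natCast, zpow_natCast, inv_pow]

theorem thetaSeries_zero_right (z : K) : thetaSeries z 0 = 1 := by
  rw [thetaSeries, tsum_eq_single 0 fun n hn => by
    rw [thetaTerm, zero_zpow _ (pow_ne_zero 2 hn), mul_zero]]
  simp [thetaTerm]

section Duplication

variable {z q : K} (hz : z ≠ 0) (hq : q ≠ 0)
include hz hq

theorem thetaTerm_add_mul_thetaTerm_sub (a b : ℤ) :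
    thetaTerm z q (a + b) * thetaTerm z q (a - b) =
      thetaTerm (z ^ 2) (q ^ 2) a * thetaTerm 1 (q ^ 2) b := by
  simp only [thetaTerm, add_sq, sub_sq, zpow_add₀ hz, zpow_add₀ hq, zpow_sub₀ hz, zpow_sub₀ hq,
    zpow_mul', zpow_ofNat, zpow_two_zpow_comm, one_zpow]
  field_simp

theorem thetaTerm_add_one_mul_thetaTerm_sub (a b : ℤ) :
    thetaTerm z q (a + b + 1) * thetaTerm z q (a - b) =
      z * q * (thetaTerm (z ^ 2 * q ^ 2) (q ^ 2) a * thetaTerm (q ^ 2) (q ^ 2) b) := by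
  simp only [thetaTerm, add_sq, sub_sq, mul_zpow, zpow_add₀ hz, zpow_add₀ hq, zpow_sub₀ hz,
    zpow_sub₀ hq, zpow_mul', zpow_ofNat, zpow_two_zpow_comm, mul_one, one_pow]
  field_simp

theorem thetaTerm_mul_sq (n : ℤ) : z * q * thetaTerm (z * q ^ 2) q n = thetaTerm z q (n + 1) := by
  simp only [thetaTerm, add_sq, mul_zpow, zpow_add₀ hz, zpow_add₀ hq, zpow_mul', zpow_ofNat,
    zpow_two_zpow_comm, mul_one, one_pow]
  ring

theorem mul_thetaSeries_mul_sq : z * q * thetaSeries (z * q ^ 2) q = thetaSeries z q := by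
  rw [thetaSeries, ← tsum_mul_left]
  simp only [thetaTerm_mul_sq hz hq]
  exact (Equiv.addRight 1).tsum_eq (thetaTerm z q)

theorem thetaSeries_sq [CompleteSpace K] (hq1 : ‖q‖ < 1) :
    thetaSeries z q ^ 2 = thetaSeries (z ^ 2) (q ^ 2) * thetaSeries 1 (q ^ 2)
      + z * q * (thetaSeries (z ^ 2 * q ^ 2) (q ^ 2) * thetaSeries (q ^ 2) (q ^ 2)) := by
  have hq2 : ‖q ^ 2‖ < 1 := by rw [norm_pow]; exact pow_lt_one₀ (norm_nonneg q) hq1 two_ne_zero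
  have hs := summable_norm_thetaTerm z hq1
  have hprod (w v : K) : thetaSeries w (q ^ 2) * thetaSeries v (q ^ 2) =
      ∑' p : ℤ × ℤ, thetaTerm w (q ^ 2) p.1 * thetaTerm v (q ^ 2) p.2 :=
    tsum_mul_tsum_of_summable_norm (summable_norm_thetaTerm w hq2) (summable_norm_thetaTerm v hq2)
  calc thetaSeries z q ^ 2 = ∑' p : ℤ × ℤ, thetaTerm z q p.1 * thetaTerm z q p.2 :=
        (sq _).trans (tsum_mul_tsum_of_summable_norm hs hs)
    _ = ∑' p : ℤ × ℤ, thetaTerm z q (p.1 + p.2) * thetaTerm z q (p.1 - p.2)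
          + ∑' p : ℤ × ℤ, thetaTerm z q (p.1 + p.2 + 1) * thetaTerm z q (p.1 - p.2) :=
        tsum_int_prod_split_parity (summable_mul_of_summable_norm hs hs)
    _ = _ := by
        simp only [hprod, ← tsum_mul_left, thetaTerm_add_mul_thetaTerm_sub hz hq,
          thetaTerm_add_one_mul_thetaTerm_sub hz hq]

end Duplication

theorem theta3_eq_thetaSeries (q : ℂ) : theta3 q = thetaSeries 1 q := by
  simp [theta3, thetaSeries, thetaTerm]

theorem theta4_eq_thetaSeries (q : ℂ) : theta4 q = thetaSeries (-1) q := rfl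

theorem theta2_zero : theta2 0 = 0 := by
  refine (tsum_congr fun n => zero_cpow (pow_ne_zero 2 fun h => ?_)).trans tsum_zero
  have h2 : ((2 * n + 1 : ℤ) : ℂ) = 0 := by
    push_cast
    linear_combination 2 * h
  rw [Int.cast_eq_zero] at h2
  omega

theorem theta2_eq_cpow_mul_thetaSeries {q : ℂ} (hq : q ≠ 0) :
    theta2 q = q ^ (4⁻¹ : ℂ) * thetaSeries q q := by
  rw [theta2, thetaSeries, ← tsum_mul_left]
  refine tsum_congr fun n => ?_
  have hexp : ((n : ℂ) + 1 / 2) ^ 2 = ((n + n ^ 2 : ℤ) : ℂ) + 4⁻¹ := by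
    push_cast
    ring
  rw [hexp, cpow_add _ _ hq, cpow_intCast, thetaTerm, zpow_add₀ hq, mul_comm]

theorem theta2_pow_four (q : ℂ) : theta2 q ^ 4 = q * thetaSeries q q ^ 4 := by
  rcases eq_or_ne q 0 with rfl | hq
  · simp [theta2_zero]
  · rw [theta2_eq_cpow_mul_thetaSeries hq, mul_pow, cpow_ofNat_inv_pow]

/-- Jacobi's quartic identity: θ₃⁴ = θ₄⁴ + θ₂⁴ for |q| < 1. -/
theorem jacobi_quartic (q : ℂ) (hq : ‖q‖ < 1) :
    theta3 q ^ 4 = theta4 q ^ 4 + theta2 q ^ 4 := by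
  rw [theta3_eq_thetaSeries, theta4_eq_thetaSeries, theta2_pow_four]
  rcases eq_or_ne q 0 with rfl | hq0
  · simp [thetaSeries_zero_right]
  set a := thetaSeries 1 (q ^ 2)
  set b := thetaSeries (q ^ 2) (q ^ 2)
  have h3 : thetaSeries 1 q ^ 2 = a ^ 2 + q * b ^ 2 := by
    simpa [← sq] using thetaSeries_sq one_ne_zero hq0 hq
  have h4 : thetaSeries (-1) q ^ 2 = a ^ 2 - q * b ^ 2 := by
    simpa [← sq, ← sub_eq_add_neg] using thetaSeries_sq (neg_ne_zero.2 one_ne_zero) hq0 hq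
  have hψ : thetaSeries q q ^ 2 = 2 * a * b := by
    have hsq := thetaSeries_sq hq0 hq0 hq
    rw [show q ^ 2 * q ^ 2 = 1 * (q ^ 2) ^ 2 by ring] at hsq
    linear_combination hsq + b * mul_thetaSeries_mul_sq one_ne_zero (pow_ne_zero 2 hq0)
  linear_combination (thetaSeries 1 q ^ 2 + a ^ 2 + q * b ^ 2) * h3
    - (thetaSeries (-1) q ^ 2 + a ^ 2 - q * b ^ 2) * h4
    - q * (thetaSeries q q ^ 2 + 2 * a * b) * hψ
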